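/- arXiv:2010.08755 — 2 statements merged into one kernel-verified Lean document; each statement's English description precedes it below -/
import Mathlib

section
/- Let W_1, ..., W_k be i.i.d. positive integrable random variables and define L_k = E[log((1/k) Σ_{i=1}^k W_i)]. Then for all positive integers m ≤ k, L_m ≤ L_k; equivalently, the intrinsic rewards r^i_k := -L_k satisfy r^i_k ≤ r^i_m. -/
/-!
The mean of `k + 1` samples is the average of its `k + 1` leave-one-out means, each of which is a
mean of `k` i.i.d. samples and so has the law of the mean of the first `k`. Concavity of `log`
(Jensen) applied pointwise to this average and then integrated gives `L k ≤ L (k + 1)`.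
-/

open MeasureTheory ProbabilityTheory Finset Real

section IID

variable {Ω κ : Type*} [MeasurableSpace Ω] {μ : Measure Ω} {W : κ → Ω → ℝ} {i₀ : κ}

lemma ProbabilityTheory.iIndepFun.map_comp_eq_pi_of_identDistrib
    (hmeas : ∀ i, AEMeasurable (W i) μ) (hindep : iIndepFun W μ)
    (hident : ∀ i, IdentDistrib (W i) (W i₀) μ μ)
    {m : ℕ} {ι : Fin m → κ} (hι : ι.Injective) :
    μ.map (fun ω j ↦ W (ι j) ω) = Measure.pi fun _ ↦ μ.map (W i₀) := by
  rw [(hindep.precomp hι).map_fun_eq_pi_map fun j ↦ hmeas (ι j)]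
  exact congrArg Measure.pi (funext fun j ↦ (hident (ι j)).map_eq)

lemma identDistrib_sum_of_card_eq (hmeas : ∀ i, AEMeasurable (W i) μ)
    (hindep : iIndepFun W μ) (hident : ∀ i, IdentDistrib (W i) (W i₀) μ μ)
    {S T : Finset κ} (hST : #S = #T) :
    IdentDistrib (fun ω ↦ ∑ i ∈ S, W i ω) (fun ω ↦ ∑ i ∈ T, W i ω) μ μ := by
  let eS : Fin #S ≃ S := (Fintype.equivFinOfCardEq (Fintype.card_coe S)).symm
  let eT : Fin #S ≃ T := (Fintype.equivFinOfCardEq ((Fintype.card_coe T).trans hST.symm)).symm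
  have hvec : IdentDistrib (fun ω j ↦ W (eS j) ω) (fun ω j ↦ W (eT j) ω) μ μ :=
    { aemeasurable_fst := aemeasurable_pi_lambda _ fun j ↦ hmeas _
      aemeasurable_snd := aemeasurable_pi_lambda _ fun j ↦ hmeas _
      map_eq := by
        rw [hindep.map_comp_eq_pi_of_identDistrib hmeas hident
            (ι := fun j ↦ eS j) (Subtype.val_injective.comp eS.injective),
          hindep.map_comp_eq_pi_of_identDistrib hmeas hident
            (ι := fun j ↦ eT j) (Subtype.val_injective.comp eT.injective)] }
  have hsum : ∀ (U : Finset κ) (e : Fin #S ≃ U) (ω : Ω),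
      ∑ i ∈ U, W i ω = ∑ j, W (e j) ω := fun U e ω ↦ by
    rw [← sum_coe_sort, ← e.sum_comp]
  simpa only [← hsum, Function.comp_def] using hvec.comp (u := fun x ↦ ∑ j, x j) (by fun_prop)

end IID

lemma sum_sum_erase_eq_mul {ι R : Type*} [DecidableEq ι] [CommRing R] (s : Finset ι)
    (x : ι → R) : ∑ j ∈ s, ∑ i ∈ s.erase j, x i = (#s - 1 : R) * ∑ i ∈ s, x i := by
  rw [sum_congr rfl fun j hj ↦ sum_erase_eq_sub hj, sum_sub_distrib, sum_const, nsmul_eq_mul]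
  ring

lemma sum_log_leaveOneOut_mean_le {ι : Type*} [DecidableEq ι] {s : Finset ι} {k : ℕ}
    (hs : #s = k + 1) (hk : 0 < k) {x : ι → ℝ} (hx : ∀ i ∈ s, 0 < x i) :
    ∑ j ∈ s, ((k + 1 : ℕ) : ℝ)⁻¹ * log ((k : ℝ)⁻¹ * ∑ i ∈ s.erase j, x i)
      ≤ log (((k + 1 : ℕ) : ℝ)⁻¹ * ∑ i ∈ s, x i) := by
  have hmean_pos : ∀ j ∈ s, (k : ℝ)⁻¹ * ∑ i ∈ s.erase j, x i ∈ Set.Ioi 0 := fun j hj ↦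
    mul_pos (by positivity) <| sum_pos (fun i hi ↦ hx i (mem_of_mem_erase hi)) <| by
      rw [← card_pos, card_erase_of_mem hj, hs]; omega
  have hk' : (k : ℝ) ≠ 0 := by positivity
  have hmean : ∑ j ∈ s, ((k + 1 : ℕ) : ℝ)⁻¹ * ((k : ℝ)⁻¹ * ∑ i ∈ s.erase j, x i)
      = ((k + 1 : ℕ) : ℝ)⁻¹ * ∑ i ∈ s, x i := by
    simp only [← mul_sum, sum_sum_erase_eq_mul, hs]
    field_simp
    push_cast
    ring
  simpa only [hmean, smul_eq_mul] using strictConcaveOn_log_Ioi.concaveOn.le_map_sum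
    (w := fun _ ↦ ((k + 1 : ℕ) : ℝ)⁻¹) (fun _ _ ↦ by positivity)
    (by rw [sum_const, hs, nsmul_eq_mul]; field_simp) hmean_pos

lemma integral_log_mean_le_succ {Ω : Type*} [MeasurableSpace Ω] {μ : Measure Ω}
    {W : ℕ → Ω → ℝ} (hmeas : ∀ i, AEMeasurable (W i) μ) (hpos : ∀ i, ∀ᵐ ω ∂μ, 0 < W i ω)
    (hindep : iIndepFun W μ) (hident : ∀ i, IdentDistrib (W i) (W 0) μ μ) {k : ℕ} (hk : 0 < k)
    (hint : Integrable (fun ω ↦ log ((k : ℝ)⁻¹ * ∑ i ∈ range k, W i ω)) μ)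
    (hint_succ : Integrable
      (fun ω ↦ log (((k + 1 : ℕ) : ℝ)⁻¹ * ∑ i ∈ range (k + 1), W i ω)) μ) :
    ∫ ω, log ((k : ℝ)⁻¹ * ∑ i ∈ range k, W i ω) ∂μ
      ≤ ∫ ω, log (((k + 1 : ℕ) : ℝ)⁻¹ * ∑ i ∈ range (k + 1), W i ω) ∂μ := by
  set leaveOneOut : ℕ → Ω → ℝ :=
    fun j ω ↦ log ((k : ℝ)⁻¹ * ∑ i ∈ (range (k + 1)).erase j, W i ω)
  have hident_j : ∀ j ∈ range (k + 1), IdentDistrib (leaveOneOut j)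
      (fun ω ↦ log ((k : ℝ)⁻¹ * ∑ i ∈ range k, W i ω)) μ μ := fun j hj ↦
    (identDistrib_sum_of_card_eq hmeas hindep hident (by simp [card_erase_of_mem hj])).comp
      (u := fun x ↦ log ((k : ℝ)⁻¹ * x)) (by fun_prop)
  have hint_j : ∀ j ∈ range (k + 1), Integrable (leaveOneOut j) μ := fun j hj ↦
    (hident_j j hj).integrable_iff.mpr hint
  calc ∫ ω, log ((k : ℝ)⁻¹ * ∑ i ∈ range k, W i ω) ∂μ
      = ∫ ω, ∑ j ∈ range (k + 1), ((k + 1 : ℕ) : ℝ)⁻¹ * leaveOneOut j ω ∂μ := by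
        rw [integral_finsetSum _ fun j hj ↦ (hint_j j hj).const_mul _,
          sum_congr rfl fun j hj ↦ by rw [integral_const_mul, (hident_j j hj).integral_eq],
          sum_const, card_range, nsmul_eq_mul]
        field_simp
    _ ≤ _ := integral_mono_ae (integrable_finsetSum _ fun j hj ↦ (hint_j j hj).const_mul _)
        hint_succ <| (ae_all_iff.2 hpos).mono fun ω hω ↦
          sum_log_leaveOneOut_mean_le (card_range _) hk fun i _ ↦ hω i

theorem stmt2_general {Ω : Type*} [MeasurableSpace Ω] (μ : Measure Ω)
    (W : ℕ → Ω → ℝ) (hmeas : ∀ i, Measurable (W i))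
    (hpos : ∀ i, ∀ᵐ ω ∂μ, 0 < W i ω)
    (hindep : iIndepFun W μ)
    (hident : ∀ i, IdentDistrib (W i) (W 0) μ μ)
    (L : ℕ → ℝ)
    (hL : ∀ k : ℕ, L k = ∫ ω, Real.log ((k : ℝ)⁻¹ * ∑ i ∈ Finset.range k, W i ω) ∂μ)
    (hLint : ∀ k : ℕ, 0 < k →
      Integrable (fun ω => Real.log ((k : ℝ)⁻¹ * ∑ i ∈ Finset.range k, W i ω)) μ) :
    ∀ m k : ℕ, 0 < m → m ≤ k → L m ≤ L k ∧ -L k ≤ -L m := by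
  intro m k hm hmk
  have hmono : L m ≤ L k := by
    induction k, hmk using Nat.le_induction with
    | base => rfl
    | succ n hmn ih =>
      have hn : 0 < n := hm.trans_le hmn
      refine ih.trans ?_
      rw [hL, hL]
      exact integral_log_mean_le_succ (fun i ↦ (hmeas i).aemeasurable) hpos hindep hident hn
        (hLint n hn) (hLint (n + 1) n.succ_pos)
  exact ⟨hmono, neg_le_neg hmono⟩

theorem stmt2 {Ω : Type*} [MeasurableSpace Ω] (μ : Measure Ω) [IsProbabilityMeasure μ]
    (W : ℕ → Ω → ℝ) (hmeas : ∀ i, Measurable (W i))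
    (hpos : ∀ i, ∀ᵐ ω ∂μ, 0 < W i ω)
    (hInt : ∀ i, Integrable (W i) μ)
    (hindep : iIndepFun W μ)
    (hident : ∀ i, IdentDistrib (W i) (W 0) μ μ)
    (L : ℕ → ℝ)
    (hL : ∀ k : ℕ, L k = ∫ ω, Real.log ((k : ℝ)⁻¹ * ∑ i ∈ Finset.range k, W i ω) ∂μ)
    (hLint : ∀ k : ℕ, 0 < k →
      Integrable (fun ω => Real.log ((k : ℝ)⁻¹ * ∑ i ∈ Finset.range k, W i ω)) μ) :
    ∀ m k : ℕ, 0 < m → m ≤ k → L m ≤ L k ∧ -L k ≤ -L m :=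
  stmt2_general μ W hmeas hpos hindep hident L hL hLint
end

section
/- If f : ℝ → ℝ is concave and X_1, ..., X_k are exchangeable integrable real random variables, then E[f((1/m) Σ_{i=1}^m X_i)] ≤ E[f((1/k) Σ_{i=1}^k X_i)] for all 1 ≤ m ≤ k (assuming the expectations exist). -/
/-!
Relabel the sample by a uniformly random permutation `σ`. Averaged over `σ`, the mean of the
first `m` relabelled variables is the mean of all `k`, so Jensen's inequality for the concave `f`
bounds the `σ`-average of `f (mean of the first m)` pointwise by `f (mean of all k)`. By
exchangeability every relabelling has the same expectation, so the `σ`-average has the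
expectation of the unrelabelled term.
-/

open MeasureTheory ProbabilityTheory Finset
open scoped BigOperators

section Permutations

variable {α M : Type*} [Fintype α] [DecidableEq α] [AddCommMonoid M] [Module ℚ≥0 M]

lemma expect_perm_apply_eq (x : α → M) (i j : α) :
    𝔼 σ : Equiv.Perm α, x (σ i) = 𝔼 σ : Equiv.Perm α, x (σ j) :=
  Fintype.expect_equiv (Equiv.mulRight (Equiv.swap j i)) _ _ fun σ => by
    simp [Equiv.Perm.mul_apply]

lemma expect_perm_apply (x : α → M) (i : α) :
    𝔼 σ : Equiv.Perm α, x (σ i) = 𝔼 j, x j := by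
  have : Nonempty α := ⟨i⟩
  calc 𝔼 σ : Equiv.Perm α, x (σ i)
      = 𝔼 i' : α, 𝔼 σ : Equiv.Perm α, x (σ i') := by
        simp only [expect_perm_apply_eq x _ i, Fintype.expect_const]
    _ = 𝔼 σ : Equiv.Perm α, 𝔼 i' : α, x (σ i') := expect_comm _ _ _
    _ = 𝔼 σ : Equiv.Perm α, 𝔼 j, x j := by
        simp only [fun σ : Equiv.Perm α => Fintype.expect_equiv σ (fun i' => x (σ i')) x
          fun _ => rfl]
    _ = 𝔼 j, x j := Fintype.expect_const _

lemma expect_perm_expect_apply {T : Finset α} (hT : T.Nonempty) (x : α → M) :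
    𝔼 σ : Equiv.Perm α, 𝔼 i ∈ T, x (σ i) = 𝔼 j, x j := by
  rw [expect_comm]
  simp only [expect_perm_apply]
  exact expect_const hT _

end Permutations

lemma ConcaveOn.le_map_expect {ι : Type*} {s : Set ℝ} {f : ℝ → ℝ} (hf : ConcaveOn ℝ s f)
    {t : Finset ι} (ht : t.Nonempty) {p : ι → ℝ} (hp : ∀ i ∈ t, p i ∈ s) :
    𝔼 i ∈ t, f (p i) ≤ f (𝔼 i ∈ t, p i) := by
  have hcard : (0 : ℝ) < #t := by exact_mod_cast ht.card_pos
  simpa [expect_eq_sum_div_card, div_eq_inv_mul, mul_sum, hcard.ne'] using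
    hf.le_map_sum (w := fun _ => (#t : ℝ)⁻¹) (fun _ _ => by positivity)
      (by simp [hcard.ne']) hp

lemma integrable_expect {Ω ι : Type*} [MeasurableSpace Ω] {μ : Measure Ω} (s : Finset ι)
    {g : ι → Ω → ℝ} (hg : ∀ i ∈ s, Integrable (g i) μ) :
    Integrable (fun ω => 𝔼 i ∈ s, g i ω) μ := by
  simp only [expect_eq_sum_div_card]
  exact (integrable_finsetSum s hg).div_const _

lemma integral_expect {Ω ι : Type*} [MeasurableSpace Ω] {μ : Measure Ω} (s : Finset ι)
    {g : ι → Ω → ℝ} (hg : ∀ i ∈ s, Integrable (g i) μ) :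
    ∫ ω, 𝔼 i ∈ s, g i ω ∂μ = 𝔼 i ∈ s, ∫ ω, g i ω ∂μ := by
  simp only [expect_eq_sum_div_card]
  rw [integral_div, integral_finsetSum s hg]

section Exchangeable

variable {Ω ι β : Type*} [MeasurableSpace Ω] [MeasurableSpace β]

def Exchangeable (X : ι → Ω → β) (μ : Measure Ω) : Prop :=
  ∀ σ : Equiv.Perm ι,
    μ.map (fun ω => fun i => X (σ i) ω) = μ.map (fun ω => fun i => X i ω)

variable {μ : Measure Ω}

lemma Exchangeable.identDistrib {X : ι → Ω → β} (hX : Exchangeable X μ)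
    (hmeas : ∀ i, Measurable (X i)) (σ : Equiv.Perm ι) :
    IdentDistrib (fun ω => fun i => X (σ i) ω) (fun ω => fun i => X i ω) μ μ where
  aemeasurable_fst := (measurable_pi_lambda _ fun i => hmeas (σ i)).aemeasurable
  aemeasurable_snd := (measurable_pi_lambda _ hmeas).aemeasurable
  map_eq := hX σ

theorem Exchangeable.integral_comp_expect_le [Fintype ι] [DecidableEq ι] {X : ι → Ω → ℝ}
    (hX : Exchangeable X μ) (hmeas : ∀ i, Measurable (X i))
    {f : ℝ → ℝ} (hf : ConcaveOn ℝ Set.univ f)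
    {T : Finset ι} (hT : T.Nonempty)
    (hIntT : Integrable (fun ω => f (𝔼 i ∈ T, X i ω)) μ)
    (hInt : Integrable (fun ω => f (𝔼 i, X i ω)) μ) :
    ∫ ω, f (𝔼 i ∈ T, X i ω) ∂μ ≤ ∫ ω, f (𝔼 i, X i ω) ∂μ := by
  set u : (ι → ℝ) → ℝ := fun v => f (𝔼 i ∈ T, v i)
  have hu : Measurable u :=
    (continuousOn_univ.mp (hf.continuousOn isOpen_univ)).measurable.comp <| by
      simp only [expect_eq_sum_div_card]; fun_prop
  have hperm σ := (hX.identDistrib hmeas σ).comp hu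
  have hIntσ (σ : Equiv.Perm ι) : Integrable (fun ω => u fun i => X (σ i) ω) μ :=
    (hperm σ).integrable_iff.mpr hIntT
  have hmean ω : 𝔼 σ : Equiv.Perm ι, 𝔼 i ∈ T, X (σ i) ω = 𝔼 i, X i ω :=
    expect_perm_expect_apply hT fun j => X j ω
  calc ∫ ω, f (𝔼 i ∈ T, X i ω) ∂μ
      = 𝔼 _σ : Equiv.Perm ι, ∫ ω, f (𝔼 i ∈ T, X i ω) ∂μ :=
        (Fintype.expect_const _).symm
    _ = 𝔼 σ : Equiv.Perm ι, ∫ ω, u (fun i => X (σ i) ω) ∂μ :=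
        expect_congr rfl fun σ _ => (hperm σ).integral_eq.symm
    _ = ∫ ω, 𝔼 σ : Equiv.Perm ι, f (𝔼 i ∈ T, X (σ i) ω) ∂μ :=
        (integral_expect _ fun σ _ => hIntσ σ).symm
    _ ≤ ∫ ω, f (𝔼 i, X i ω) ∂μ := by
        refine integral_mono (integrable_expect _ fun σ _ => hIntσ σ) hInt fun ω => ?_
        simpa only [hmean] using
          hf.le_map_expect (p := fun σ : Equiv.Perm ι => 𝔼 i ∈ T, X (σ i) ω) univ_nonempty
            fun _ _ => Set.mem_univ _

end Exchangeable

theorem stmt12_general {Ω : Type*} [MeasurableSpace Ω] (μ : Measure Ω)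
    (k : ℕ) (f : ℝ → ℝ) (hf : ConcaveOn ℝ Set.univ f)
    (X : Fin k → Ω → ℝ) (hmeas : ∀ i, Measurable (X i))
    (hexch : ∀ σ : Equiv.Perm (Fin k),
      μ.map (fun ω => fun i => X (σ i) ω) = μ.map (fun ω => fun i => X i ω))
    (m : ℕ) (hm : 1 ≤ m) (hmk : m ≤ k)
    (hIntm : Integrable (fun ω =>
      f ((m : ℝ)⁻¹ * ∑ i ∈ Finset.univ.filter (fun i : Fin k => (i : ℕ) < m), X i ω)) μ)
    (hIntk : Integrable (fun ω => f ((k : ℝ)⁻¹ * ∑ i, X i ω)) μ) :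
    (∫ ω, f ((m : ℝ)⁻¹ * ∑ i ∈ Finset.univ.filter (fun i : Fin k => (i : ℕ) < m), X i ω) ∂μ)
      ≤ ∫ ω, f ((k : ℝ)⁻¹ * ∑ i, X i ω) ∂μ := by
  set T := Finset.univ.filter (fun i : Fin k => (i : ℕ) < m)
  have hTcard : #T = m := by simp [T, Fin.card_filter_val_lt, hmk]
  have hT : T.Nonempty := card_pos.mp (by omega)
  have hmeanT ω : (m : ℝ)⁻¹ * ∑ i ∈ T, X i ω = 𝔼 i ∈ T, X i ω := by
    rw [expect_eq_sum_div_card, hTcard, inv_mul_eq_div]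
  have hmean ω : (k : ℝ)⁻¹ * ∑ i, X i ω = 𝔼 i, X i ω := by
    rw [Fintype.expect_eq_sum_div_card, Fintype.card_fin, inv_mul_eq_div]
  simp only [hmeanT, hmean] at hIntm hIntk ⊢
  exact Exchangeable.integral_comp_expect_le hexch hmeas hf hT hIntm hIntk

theorem stmt12 {Ω : Type*} [MeasurableSpace Ω] (μ : Measure Ω) [IsProbabilityMeasure μ]
    (k : ℕ) (f : ℝ → ℝ) (hf : ConcaveOn ℝ Set.univ f)
    (X : Fin k → Ω → ℝ) (hmeas : ∀ i, Measurable (X i)) (hInt : ∀ i, Integrable (X i) μ)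
    (hexch : ∀ σ : Equiv.Perm (Fin k),
      μ.map (fun ω => fun i => X (σ i) ω) = μ.map (fun ω => fun i => X i ω))
    (m : ℕ) (hm : 1 ≤ m) (hmk : m ≤ k)
    (hIntm : Integrable (fun ω =>
      f ((m : ℝ)⁻¹ * ∑ i ∈ Finset.univ.filter (fun i : Fin k => (i : ℕ) < m), X i ω)) μ)
    (hIntk : Integrable (fun ω => f ((k : ℝ)⁻¹ * ∑ i, X i ω)) μ) :
    (∫ ω, f ((m : ℝ)⁻¹ * ∑ i ∈ Finset.univ.filter (fun i : Fin k => (i : ℕ) < m), X i ω) ∂μ)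
      ≤ ∫ ω, f ((k : ℝ)⁻¹ * ∑ i, X i ω) ∂μ :=
  stmt12_general μ k f hf X hmeas hexch m hm hmk hIntm hIntk
end
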